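/- arXiv:2012.10068 — 3 statements merged into one kernel-verified Lean document; each statement's English description precedes it below -/
import Mathlib

section
/- Let k₁, k₂, U : [0,∞) → [0,∞) be measurable and nonnegative, let μ₁, q₁, γ₁, γ₂, γ ≥ 0, and let s : [0,∞) → ℝ be measurable with 0 ≤ s(a) ≤ 1 for all a. Define R₀ = ∫₀^∞ k₂(x)U(x)e^{-γx} ( ∫₀ˣ γ₁ e^{(γ-(γ₁+γ₂))y} ( ∫₀^y q₁ e^{((γ₁+γ₂)-(μ₁+q₁))z} ( ∫₀^z k₁(a)e^{(μ₁+q₁)a} da ) dz ) dy ) dx + ∫₀^∞ k₂(x)U(x)e^{-γx} ( ∫₀ˣ μ₁ e^{(γ-(μ₁+q₁))z} ( ∫₀^z k₁(a)e^{(μ₁+q₁)a} da ) dz ) dx, and define I(s) = ∫₀^∞ s(a)k₁(a)e^{(μ₁+q₁)a} ( ∫ₐ^∞ q₁ e^{((γ₁+γ₂)-(μ₁+q₁))z} ( ∫_z^∞ γ₁ e^{(γ-(γ₁+γ₂))y} ( ∫_y^∞ k₂(x)U(x)e^{-γx} dx ) dy ) dz ) da + ∫₀^∞ s(a)k₁(a)e^{(μ₁+q₁)a}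 ( ∫ₐ^∞ μ₁ e^{(γ-(μ₁+q₁))z} ( ∫_z^∞ k₂(x)U(x)e^{-γx} dx ) dz ) da, both taken as iterated Lebesgue integrals with values in [0,∞]. Then I(s) ≤ R₀. -/
/-!
Once `s ≡ 1`, each term of `I(s)` and the matching term of `R₀` integrate the same nonnegative
function over the simplex `0 < a < z (< y) < x`, only in opposite orders, so they agree by
Tonelli; replacing `s` by `1` can only increase `I(s)`.
-/

open MeasureTheory Set
open scoped ENNReal

theorem setLIntegral_Ioi_mul_setLIntegral_Ioi_swap {f g : ℝ → ℝ≥0∞} (hf : Measurable f)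
    (hg : Measurable g) (c : ℝ) :
    ∫⁻ x in Ioi c, f x * ∫⁻ y in Ioi x, g y = ∫⁻ y in Ioi c, g y * ∫⁻ x in Ioc c y, f x := by
  have htriangle : ∀ x y, f x * (Ioi x).indicator g y = g y * (Iio y).indicator f x := by
    intro x y; by_cases h : x < y <;> simp [h, mul_comm]
  have hmeas : Measurable (Function.uncurry fun x y => g y * (Iio y).indicator f x) := by
    have : (Function.uncurry fun x y => g y * (Iio y).indicator f x)
        = {p : ℝ × ℝ | p.1 < p.2}.indicator (fun p => f p.1 * g p.2) := by
      ext ⟨x, y⟩; by_cases h : x < y <;> simp [h, mul_comm]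
    rw [this]
    exact ((hf.comp measurable_fst).mul (hg.comp measurable_snd)).indicator
      (measurableSet_lt measurable_fst measurable_snd)
  calc ∫⁻ x in Ioi c, f x * ∫⁻ y in Ioi x, g y
      = ∫⁻ x in Ioi c, ∫⁻ y in Ioi c, f x * (Ioi x).indicator g y := by
        refine setLIntegral_congr_fun measurableSet_Ioi fun x hx => ?_
        rw [lintegral_const_mul _ (hg.indicator measurableSet_Ioi),
          lintegral_indicator measurableSet_Ioi, Measure.restrict_restrict measurableSet_Ioi,
          Ioi_inter_Ioi, sup_eq_left.mpr hx.le]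
    _ = ∫⁻ y in Ioi c, ∫⁻ x in Ioi c, g y * (Iio y).indicator f x := by
        simp_rw [htriangle]
        exact lintegral_lintegral_swap hmeas.aemeasurable
    _ = ∫⁻ y in Ioi c, g y * ∫⁻ x in Ioc c y, f x := by
        refine lintegral_congr fun y => ?_
        rw [lintegral_const_mul _ (hf.indicator measurableSet_Iio),
          lintegral_indicator measurableSet_Iio, Measure.restrict_restrict measurableSet_Iio,
          Iio_inter_Ioi, setLIntegral_congr Ioo_ae_eq_Ioc]

theorem measurable_setLIntegral_Ioi (f : ℝ → ℝ≥0∞) :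
    Measurable fun x => ∫⁻ y in Ioi x, f y :=
  Antitone.measurable fun _ _ h => lintegral_mono_set (Ioi_subset_Ioi h)

theorem measurable_setLIntegral_Ioc (f : ℝ → ℝ≥0∞) (c : ℝ) :
    Measurable fun x => ∫⁻ y in Ioc c x, f y :=
  Monotone.measurable fun _ _ h => lintegral_mono_set (Ioc_subset_Ioc_right h)

theorem setLIntegral_Ioi_triple_swap {f g h : ℝ → ℝ≥0∞} (hf : Measurable f)
    (hg : Measurable g) (hh : Measurable h) (c : ℝ) :
    ∫⁻ a in Ioi c, f a * ∫⁻ z in Ioi a, g z * ∫⁻ x in Ioi z, h x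
      = ∫⁻ x in Ioi c, h x * ∫⁻ z in Ioc c x, g z * ∫⁻ a in Ioc c z, f a := by
  calc ∫⁻ a in Ioi c, f a * ∫⁻ z in Ioi a, g z * ∫⁻ x in Ioi z, h x
      = ∫⁻ z in Ioi c, (g z * ∫⁻ a in Ioc c z, f a) * ∫⁻ x in Ioi z, h x := by
        rw [setLIntegral_Ioi_mul_setLIntegral_Ioi_swap (g := fun z => g z * ∫⁻ x in Ioi z, h x)
          hf (hg.mul (measurable_setLIntegral_Ioi h))]
        simp only [mul_right_comm]
    _ = _ := setLIntegral_Ioi_mul_setLIntegral_Ioi_swap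
        (hg.mul (measurable_setLIntegral_Ioc f c)) hh c

theorem setLIntegral_Ioi_quadruple_swap {f g h k : ℝ → ℝ≥0∞} (hf : Measurable f)
    (hg : Measurable g) (hh : Measurable h) (hk : Measurable k) (c : ℝ) :
    ∫⁻ a in Ioi c, f a * ∫⁻ z in Ioi a, g z * ∫⁻ y in Ioi z, h y * ∫⁻ x in Ioi y, k x
      = ∫⁻ x in Ioi c, k x *
          ∫⁻ y in Ioc c x, h y * ∫⁻ z in Ioc c y, g z * ∫⁻ a in Ioc c z, f a := by
  calc ∫⁻ a in Ioi c, f a * ∫⁻ z in Ioi a, g z * ∫⁻ y in Ioi z, h y * ∫⁻ x in Ioi y, k x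
      = ∫⁻ y in Ioi c, (h y * ∫⁻ z in Ioc c y, g z * ∫⁻ a in Ioc c z, f a) *
          ∫⁻ x in Ioi y, k x := by
        rw [setLIntegral_Ioi_triple_swap (h := fun y => h y * ∫⁻ x in Ioi y, k x)
          hf hg (hh.mul (measurable_setLIntegral_Ioi k))]
        simp only [mul_right_comm]
    _ = _ := setLIntegral_Ioi_mul_setLIntegral_Ioi_swap
        (hh.mul (measurable_setLIntegral_Ioc _ c)) hk c

theorem stmt_8_general (k₁ k₂ U s : ℝ → ℝ) (μ₁ q₁ γ₁ γ₂ γ : ℝ)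
    (hk₁m : Measurable k₁) (hk₂m : Measurable k₂) (hUm : Measurable U)
    (hk₁ : ∀ x, 0 ≤ k₁ x)
    (hs1 : ∀ a, s a ≤ 1)
    (R₀ : ℝ≥0∞)
    (hR₀ : R₀ =
      (∫⁻ x in Set.Ioi (0:ℝ), ENNReal.ofReal (k₂ x * U x * Real.exp (-γ * x)) *
        ∫⁻ y in Set.Ioc 0 x,
          ENNReal.ofReal (γ₁ * Real.exp ((γ - (γ₁ + γ₂)) * y)) *
          ∫⁻ z in Set.Ioc 0 y,
            ENNReal.ofReal (q₁ * Real.exp (((γ₁ + γ₂) - (μ₁ + q₁)) * z)) *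
            ∫⁻ a in Set.Ioc 0 z, ENNReal.ofReal (k₁ a * Real.exp ((μ₁ + q₁) * a))) +
      (∫⁻ x in Set.Ioi (0:ℝ), ENNReal.ofReal (k₂ x * U x * Real.exp (-γ * x)) *
        ∫⁻ z in Set.Ioc 0 x,
          ENNReal.ofReal (μ₁ * Real.exp ((γ - (μ₁ + q₁)) * z)) *
          ∫⁻ a in Set.Ioc 0 z, ENNReal.ofReal (k₁ a * Real.exp ((μ₁ + q₁) * a))))
    (I : ℝ≥0∞)
    (hI : I =
      (∫⁻ a in Set.Ioi (0:ℝ),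
        ENNReal.ofReal (s a * k₁ a * Real.exp ((μ₁ + q₁) * a)) *
        ∫⁻ z in Set.Ioi a,
          ENNReal.ofReal (q₁ * Real.exp (((γ₁ + γ₂) - (μ₁ + q₁)) * z)) *
          ∫⁻ y in Set.Ioi z,
            ENNReal.ofReal (γ₁ * Real.exp ((γ - (γ₁ + γ₂)) * y)) *
            ∫⁻ x in Set.Ioi y, ENNReal.ofReal (k₂ x * U x * Real.exp (-γ * x))) +
      (∫⁻ a in Set.Ioi (0:ℝ),
        ENNReal.ofReal (s a * k₁ a * Real.exp ((μ₁ + q₁) * a)) *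
        ∫⁻ z in Set.Ioi a,
          ENNReal.ofReal (μ₁ * Real.exp ((γ - (μ₁ + q₁)) * z)) *
          ∫⁻ x in Set.Ioi z, ENNReal.ofReal (k₂ x * U x * Real.exp (-γ * x)))) :
    I ≤ R₀ := by
  have hK₁ : Measurable fun a => ENNReal.ofReal (k₁ a * Real.exp ((μ₁ + q₁) * a)) := by fun_prop
  have hK₂ : Measurable fun x => ENNReal.ofReal (k₂ x * U x * Real.exp (-γ * x)) := by fun_prop
  have hs_le : ∀ a, ENNReal.ofReal (s a * k₁ a * Real.exp ((μ₁ + q₁) * a))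
      ≤ ENNReal.ofReal (k₁ a * Real.exp ((μ₁ + q₁) * a)) := fun a =>
    ENNReal.ofReal_le_ofReal <| by
      rw [mul_assoc]
      exact mul_le_of_le_one_left (mul_nonneg (hk₁ a) (Real.exp_nonneg _)) (hs1 a)
  rw [hI, hR₀, ← setLIntegral_Ioi_quadruple_swap hK₁ (by fun_prop) (by fun_prop) hK₂,
    ← setLIntegral_Ioi_triple_swap hK₁ (by fun_prop) hK₂]
  exact add_le_add (lintegral_mono fun a => mul_le_mul' (hs_le a) le_rfl)
    (lintegral_mono fun a => mul_le_mul' (hs_le a) le_rfl)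

/-- The coefficient `I(s)` appearing in the derivative of the Liapunov
function of the age-structured SEQIR model is bounded by the basic
reproduction number `R₀` whenever `0 ≤ s ≤ 1`; all integrals are iterated
Lebesgue integrals with values in `[0,∞]`. -/
theorem stmt_8 (k₁ k₂ U s : ℝ → ℝ) (μ₁ q₁ γ₁ γ₂ γ : ℝ)
    (hk₁m : Measurable k₁) (hk₂m : Measurable k₂) (hUm : Measurable U)
    (hsm : Measurable s)
    (hk₁ : ∀ x, 0 ≤ k₁ x) (hk₂ : ∀ x, 0 ≤ k₂ x) (hU : ∀ x, 0 ≤ U x)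
    (hs0 : ∀ a, 0 ≤ s a) (hs1 : ∀ a, s a ≤ 1)
    (hμ₁ : 0 ≤ μ₁) (hq₁ : 0 ≤ q₁) (hγ₁ : 0 ≤ γ₁) (hγ₂ : 0 ≤ γ₂) (hγ : 0 ≤ γ)
    (R₀ : ℝ≥0∞)
    (hR₀ : R₀ =
      (∫⁻ x in Set.Ioi (0:ℝ), ENNReal.ofReal (k₂ x * U x * Real.exp (-γ * x)) *
        ∫⁻ y in Set.Ioc 0 x,
          ENNReal.ofReal (γ₁ * Real.exp ((γ - (γ₁ + γ₂)) * y)) *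
          ∫⁻ z in Set.Ioc 0 y,
            ENNReal.ofReal (q₁ * Real.exp (((γ₁ + γ₂) - (μ₁ + q₁)) * z)) *
            ∫⁻ a in Set.Ioc 0 z, ENNReal.ofReal (k₁ a * Real.exp ((μ₁ + q₁) * a))) +
      (∫⁻ x in Set.Ioi (0:ℝ), ENNReal.ofReal (k₂ x * U x * Real.exp (-γ * x)) *
        ∫⁻ z in Set.Ioc 0 x,
          ENNReal.ofReal (μ₁ * Real.exp ((γ - (μ₁ + q₁)) * z)) *
          ∫⁻ a in Set.Ioc 0 z, ENNReal.ofReal (k₁ a * Real.exp ((μ₁ + q₁) * a))))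
    (I : ℝ≥0∞)
    (hI : I =
      (∫⁻ a in Set.Ioi (0:ℝ),
        ENNReal.ofReal (s a * k₁ a * Real.exp ((μ₁ + q₁) * a)) *
        ∫⁻ z in Set.Ioi a,
          ENNReal.ofReal (q₁ * Real.exp (((γ₁ + γ₂) - (μ₁ + q₁)) * z)) *
          ∫⁻ y in Set.Ioi z,
            ENNReal.ofReal (γ₁ * Real.exp ((γ - (γ₁ + γ₂)) * y)) *
            ∫⁻ x in Set.Ioi y, ENNReal.ofReal (k₂ x * U x * Real.exp (-γ * x))) +
      (∫⁻ a in Set.Ioi (0:ℝ),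
        ENNReal.ofReal (s a * k₁ a * Real.exp ((μ₁ + q₁) * a)) *
        ∫⁻ z in Set.Ioi a,
          ENNReal.ofReal (μ₁ * Real.exp ((γ - (μ₁ + q₁)) * z)) *
          ∫⁻ x in Set.Ioi z, ENNReal.ofReal (k₂ x * U x * Real.exp (-γ * x)))) :
    I ≤ R₀ :=
  stmt_8_general k₁ k₂ U s μ₁ q₁ γ₁ γ₂ γ hk₁m hk₂m hUm hk₁ hs1 R₀ hR₀ I hI
end

section
/- Let μ, γ, μ₁, q₁, k₂ > 0. Then the iterated improper integral ∫₀^∞ k₂·μ·e^{-(μ+γ)b} ( ∫₀ᵇ μ₁·e^{(γ-(μ₁+q₁))σ} ( ∫₀^σ e^{(μ₁+q₁)y} dy ) dσ ) db converges and equals k₂·μ₁ / ((μ+γ)(μ+μ₁+q₁)). -/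
open MeasureTheory Set

private lemma L1 (r b : ℝ) (hr : r ≠ 0) :
    ∫ σ in (0:ℝ)..b, Real.exp (r*σ) = (Real.exp (r*b) - 1)/r := by
  rw [intervalIntegral.integral_comp_mul_left Real.exp hr, integral_exp]
  simp [smul_eq_mul]
  ring

private lemma L2 (r : ℝ) (hr : 0 < r) :
    IntegrableOn (fun x => Real.exp (-(r*x))) (Set.Ioi (0:ℝ)) := by
  simpa [neg_mul] using exp_neg_integrableOn_Ioi 0 hr

private lemma L3 (r : ℝ) (hr : 0 < r) :
    ∫ x in Set.Ioi (0:ℝ), Real.exp (-(r*x)) = 1/r := by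
  have := Real.integral_rpow_mul_exp_neg_mul_Ioi (a := 1) one_pos hr
  simpa using this

private lemma L4 (r : ℝ) (hr : 0 < r) :
    IntegrableOn (fun x => x * Real.exp (-(r*x))) (Set.Ioi (0:ℝ)) := by
  have h0 : IntegrableOn (fun x : ℝ => Real.exp (-x) * x ^ ((2:ℝ) - 1)) (Set.Ioi (0:ℝ)) :=
    Real.GammaIntegral_convergent two_pos
  rw [show ((2:ℝ) - 1) = 1 by norm_num] at h0
  simp only [Real.rpow_one] at h0
  have h0' : IntegrableOn (fun x : ℝ => Real.exp (-x) * x) (Set.Ioi (r*0)) := by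
    simpa using h0
  have h1 := (MeasureTheory.integrableOn_Ioi_comp_mul_left_iff
    (fun y : ℝ => Real.exp (-y) * y) 0 hr).mpr h0'
  have h2 : (fun x : ℝ => x * Real.exp (-(r*x)))
      = fun x => (1/r) * (Real.exp (-(r*x)) * (r*x)) := by
    funext x; field_simp
  rw [h2]
  exact h1.const_mul _

private lemma L5 (r : ℝ) (hr : 0 < r) :
    ∫ x in Set.Ioi (0:ℝ), x * Real.exp (-(r*x)) = 1/r^2 := by
  have := Real.integral_rpow_mul_exp_neg_mul_Ioi (a := 2) two_pos hr
  rw [show ((2:ℝ) - 1) = 1 by norm_num] at this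
  simp only [Real.rpow_one, Real.Gamma_two] at this
  rw [this]
  rw [show ((1:ℝ)/r) ^ (2:ℝ) = (1/r)^(2:ℕ) by rw [← Real.rpow_natCast]; norm_num]
  field_simp

private lemma L6 (μ₁ γ c : ℝ) (hc : c ≠ 0) (hγ : γ ≠ 0) (b : ℝ) :
    (∫ σ in (0:ℝ)..b, μ₁ * Real.exp ((γ - c) * σ) * ∫ y in (0:ℝ)..σ, Real.exp (c * y))
      = (μ₁/c) * ((Real.exp (γ*b) - 1)/γ)
        - (μ₁/c) * ∫ σ in (0:ℝ)..b, Real.exp ((γ-c)*σ) := by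
  have key : ∀ σ : ℝ, μ₁ * Real.exp ((γ - c) * σ) * ∫ y in (0:ℝ)..σ, Real.exp (c * y)
      = (μ₁/c) * Real.exp (γ*σ) - (μ₁/c) * Real.exp ((γ-c)*σ) := by
    intro σ
    rw [L1 c σ hc]
    have h1 : Real.exp ((γ-c)*σ) * Real.exp (c*σ) = Real.exp (γ*σ) := by
      rw [← Real.exp_add]; congr 1; ring
    field_simp
    linear_combination μ₁ * h1
  rw [intervalIntegral.integral_congr (g := fun σ =>
      (μ₁/c) * Real.exp (γ*σ) - (μ₁/c) * Real.exp ((γ-c)*σ)) (fun σ _ => key σ)]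
  rw [intervalIntegral.integral_sub
      (Continuous.intervalIntegrable (by fun_prop) _ _)
      (Continuous.intervalIntegrable (by fun_prop) _ _),
    intervalIntegral.integral_const_mul, intervalIntegral.integral_const_mul, L1 γ b hγ]

private lemma L7 (A B D r1 r2 r3 : ℝ) (h1 : 0 < r1) (h2 : 0 < r2) (h3 : 0 < r3) :
    (∫ b in Set.Ioi (0:ℝ),
      (A * Real.exp (-(r1*b)) + B * Real.exp (-(r2*b)) + D * Real.exp (-(r3*b))))
      = A/r1 + B/r2 + D/r3 := by
  have i1 : Integrable (fun b : ℝ => A * Real.exp (-(r1*b))) (volume.restrict (Ioi 0)) :=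
    (L2 r1 h1).const_mul A
  have i2 : Integrable (fun b : ℝ => B * Real.exp (-(r2*b))) (volume.restrict (Ioi 0)) :=
    (L2 r2 h2).const_mul B
  have i3 : Integrable (fun b : ℝ => D * Real.exp (-(r3*b))) (volume.restrict (Ioi 0)) :=
    (L2 r3 h3).const_mul D
  have i12 : Integrable (fun b : ℝ => A * Real.exp (-(r1*b)) + B * Real.exp (-(r2*b)))
      (volume.restrict (Ioi 0)) := i1.add i2
  rw [integral_add i12 i3, integral_add i1 i2,
      integral_const_mul, integral_const_mul, integral_const_mul, L3 r1 h1, L3 r2 h2, L3 r3 h3]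
  ring

private lemma L8 (A B D r1 r3 : ℝ) (h1 : 0 < r1) (h3 : 0 < r3) :
    (∫ b in Set.Ioi (0:ℝ),
      (A * Real.exp (-(r1*b)) + B * (b * Real.exp (-(r3*b))) + D * Real.exp (-(r3*b))))
      = A/r1 + B/r3^2 + D/r3 := by
  have i1 : Integrable (fun b : ℝ => A * Real.exp (-(r1*b))) (volume.restrict (Ioi 0)) :=
    (L2 r1 h1).const_mul A
  have i2 : Integrable (fun b : ℝ => B * (b * Real.exp (-(r3*b)))) (volume.restrict (Ioi 0)) :=
    (L4 r3 h3).const_mul B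
  have i3 : Integrable (fun b : ℝ => D * Real.exp (-(r3*b))) (volume.restrict (Ioi 0)) :=
    (L2 r3 h3).const_mul D
  have i12 : Integrable (fun b : ℝ => A * Real.exp (-(r1*b)) + B * (b * Real.exp (-(r3*b))))
      (volume.restrict (Ioi 0)) := i1.add i2
  rw [integral_add i12 i3, integral_add i1 i2,
      integral_const_mul, integral_const_mul, integral_const_mul, L3 r1 h1, L5 r3 h3, L3 r3 h3]
  ring

/-- Direct-progression part `R₁` of the basic reproduction number in the
negative-exponential-survival case:
`∫₀^∞ k₂ μ e^{-(μ+γ)b} (∫₀ᵇ μ₁ e^{(γ-(μ₁+q₁))σ} (∫₀^σ e^{(μ₁+q₁)y} dy) dσ) db`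
converges and equals `k₂ μ₁ / ((μ+γ)(μ+μ₁+q₁))`. -/
theorem stmt_9 (μ γ μ₁ q₁ k₂ : ℝ)
    (hμ : 0 < μ) (hγ : 0 < γ) (hμ₁ : 0 < μ₁) (hq₁ : 0 < q₁) (hk₂ : 0 < k₂) :
    IntegrableOn
      (fun b => k₂ * μ * Real.exp (-(μ + γ) * b) *
        ∫ σ in (0:ℝ)..b, μ₁ * Real.exp ((γ - (μ₁ + q₁)) * σ) *
          ∫ y in (0:ℝ)..σ, Real.exp ((μ₁ + q₁) * y))
      (Set.Ioi (0:ℝ)) ∧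
    (∫ b in Set.Ioi (0:ℝ), k₂ * μ * Real.exp (-(μ + γ) * b) *
        ∫ σ in (0:ℝ)..b, μ₁ * Real.exp ((γ - (μ₁ + q₁)) * σ) *
          ∫ y in (0:ℝ)..σ, Real.exp ((μ₁ + q₁) * y)) =
      k₂ * μ₁ / ((μ + γ) * (μ + μ₁ + q₁)) := by
  have hc : (0:ℝ) < μ₁ + q₁ := by linarith
  have hs : (0:ℝ) < μ + γ := by linarith
  have hmc : (0:ℝ) < μ + μ₁ + q₁ := by linarith
  have hcne := hc.ne'
  have hγne := hγ.ne'
  have hμne := hμ.ne'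
  have hsne := hs.ne'
  have hmcne := hmc.ne'
  rcases eq_or_ne γ (μ₁ + q₁) with hgc | hgc
  · -- degenerate case γ = μ₁ + q₁
    have hmid : ∀ b : ℝ, (∫ σ in (0:ℝ)..b, μ₁ * Real.exp ((γ - (μ₁+q₁)) * σ) *
          ∫ y in (0:ℝ)..σ, Real.exp ((μ₁+q₁) * y))
        = (μ₁/(μ₁+q₁)) * ((Real.exp (γ*b) - 1)/γ) - (μ₁/(μ₁+q₁)) * b := by
      intro b
      rw [L6 μ₁ γ (μ₁+q₁) hcne hγne b]
      congr 1
      rw [hgc]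
      simp
    have hfun : (fun b => k₂ * μ * Real.exp (-(μ + γ) * b) *
          ∫ σ in (0:ℝ)..b, μ₁ * Real.exp ((γ - (μ₁ + q₁)) * σ) *
            ∫ y in (0:ℝ)..σ, Real.exp ((μ₁ + q₁) * y))
        = fun b => (k₂*μ*μ₁/((μ₁+q₁)*γ)) * Real.exp (-(μ*b))
            + (-(k₂*μ*μ₁/(μ₁+q₁))) * (b * Real.exp (-((μ+γ)*b)))
            + (-(k₂*μ*μ₁/((μ₁+q₁)*γ))) * Real.exp (-((μ+γ)*b)) := by
      funext b
      rw [hmid b]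
      have e1 : Real.exp (-(μ*b)) = Real.exp (-(μ+γ)*b) * Real.exp (γ*b) := by
        rw [← Real.exp_add]; congr 1; ring
      have e3 : Real.exp (-((μ+γ)*b)) = Real.exp (-(μ+γ)*b) := by congr 1; ring
      rw [e1, e3]
      field_simp
      ring
    rw [hfun]
    constructor
    · exact (((L2 μ hμ).const_mul _).add ((L4 _ hs).const_mul _)).add ((L2 _ hs).const_mul _)
    · rw [L8 _ _ _ μ (μ+γ) hμ hs]
      subst hgc
      field_simp
      ring
  · -- non-degenerate case
    have hgcne : γ - (μ₁+q₁) ≠ 0 := sub_ne_zero.mpr hgc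
    have hmid : ∀ b : ℝ, (∫ σ in (0:ℝ)..b, μ₁ * Real.exp ((γ - (μ₁+q₁)) * σ) *
          ∫ y in (0:ℝ)..σ, Real.exp ((μ₁+q₁) * y))
        = (μ₁/(μ₁+q₁)) * ((Real.exp (γ*b) - 1)/γ)
          - (μ₁/(μ₁+q₁)) * ((Real.exp ((γ-(μ₁+q₁))*b) - 1)/(γ-(μ₁+q₁))) := by
      intro b
      rw [L6 μ₁ γ (μ₁+q₁) hcne hγne b, L1 _ b hgcne]
    have hfun : (fun b => k₂ * μ * Real.exp (-(μ + γ) * b) *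
          ∫ σ in (0:ℝ)..b, μ₁ * Real.exp ((γ - (μ₁ + q₁)) * σ) *
            ∫ y in (0:ℝ)..σ, Real.exp ((μ₁ + q₁) * y))
        = fun b => (k₂*μ*μ₁/((μ₁+q₁)*γ)) * Real.exp (-(μ*b))
            + (-(k₂*μ*μ₁/((μ₁+q₁)*(γ-(μ₁+q₁))))) * Real.exp (-((μ+μ₁+q₁)*b))
            + (k₂*μ*μ₁/(μ₁+q₁) * (1/(γ-(μ₁+q₁)) - 1/γ)) * Real.exp (-((μ+γ)*b)) := by
      funext b
      rw [hmid b]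
      have e1 : Real.exp (-(μ*b)) = Real.exp (-(μ+γ)*b) * Real.exp (γ*b) := by
        rw [← Real.exp_add]; congr 1; ring
      have e2 : Real.exp (-((μ+μ₁+q₁)*b))
          = Real.exp (-(μ+γ)*b) * Real.exp ((γ-(μ₁+q₁))*b) := by
        rw [← Real.exp_add]; congr 1; ring
      have e3 : Real.exp (-((μ+γ)*b)) = Real.exp (-(μ+γ)*b) := by congr 1; ring
      rw [e1, e2, e3]
      field_simp
      ring
    rw [hfun]
    constructor
    · exact (((L2 μ hμ).const_mul _).add ((L2 _ hmc).const_mul _)).add ((L2 _ hs).const_mul _)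
    · rw [L7 _ _ _ μ (μ+μ₁+q₁) (μ+γ) hμ hmc hs]
      field_simp
      ring
end

section
/- Let μ, γ, μ₁, q₁, γ₁, γ₂, k₂ > 0. Then the iterated improper integral ∫₀^∞ k₂·μ·e^{-(μ+γ)b} ( ∫₀ᵇ γ₁·e^{(γ-(γ₁+γ₂))σ} ( ∫₀^σ q₁·e^{((γ₁+γ₂)-(μ₁+q₁))η} ( ∫₀^η e^{(μ₁+q₁)y} dy ) dη ) dσ ) db converges and equals k₂·γ₁·q₁ / ((μ+γ)(μ+γ₁+γ₂)(μ+μ₁+q₁)). -/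
open MeasureTheory Real Filter Set

lemma prim_hasDerivAt {f : ℝ → ℝ} (hf : Continuous f) (b : ℝ) :
    HasDerivAt (fun u => ∫ y in (0:ℝ)..u, f y) (f b) b :=
  intervalIntegral.integral_hasDerivAt_right (hf.intervalIntegrable 0 b)
    hf.aestronglyMeasurable.stronglyMeasurableAtFilter hf.continuousAt

lemma my_integral_exp_mul (β a b : ℝ) (hβ : β ≠ 0) :
    ∫ y in a..b, Real.exp (β * y) = (Real.exp (β * b) - Real.exp (β * a)) / β := by
  have h : ∀ x : ℝ, HasDerivAt (fun y => Real.exp (β * y) / β) (Real.exp (β * x)) x := by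
    intro x
    have := ((hasDerivAt_id x).const_mul β).exp
    simpa [mul_comm, mul_div_cancel_left₀ _ hβ] using this.div_const β
  rw [intervalIntegral.integral_eq_sub_of_hasDerivAt (fun x _ => h x)
    ((Real.continuous_exp.comp (continuous_const.mul continuous_id)).intervalIntegrable a b)]
  ring

lemma my_integral_exp_neg_mul_Ioi {α : ℝ} (hα : 0 < α) :
    ∫ b in Set.Ioi (0:ℝ), Real.exp (-α * b) = 1 / α := by
  have h : ∀ x ∈ Set.Ici (0:ℝ), HasDerivAt (fun b => -(1/α) * Real.exp (-α * b))
      (Real.exp (-α * x)) x := by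
    intro x _
    have := (((hasDerivAt_id x).const_mul (-α)).exp).const_mul (-(1/α))
    refine this.congr_deriv ?_
    field_simp
    rfl
  have hlim0 : Tendsto (fun b : ℝ => Real.exp (-α * b)) atTop (nhds 0) := by
    apply Real.tendsto_exp_atBot.comp
    exact Tendsto.const_mul_atTop_of_neg (neg_neg_iff_pos.mpr hα) tendsto_id
  have hlim : Tendsto (fun b : ℝ => -(1/α) * Real.exp (-α * b)) atTop (nhds 0) := by
    simpa using hlim0.const_mul (-(1/α))
  have := integral_Ioi_of_hasDerivAt_of_tendsto' h (exp_neg_integrableOn_Ioi 0 hα) hlim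
  simp at this
  rw [one_div]
  simpa [neg_mul] using this

/-- Key integration-by-parts lemma. -/
lemma key {α β C : ℝ} (hβ : 0 < β) (hαβ : β < α) (hC : 0 ≤ C)
    {f : ℝ → ℝ} (hf : Continuous f)
    (hf0 : ∀ t, 0 ≤ t → 0 ≤ f t) (hfb : ∀ t, 0 ≤ t → f t ≤ C * Real.exp (β * t)) :
    (∀ b, 0 ≤ b → 0 ≤ ∫ y in (0:ℝ)..b, f y) ∧
    (∀ b, 0 ≤ b → (∫ y in (0:ℝ)..b, f y) ≤ C / β * Real.exp (β * b)) ∧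
    IntegrableOn (fun b => Real.exp (-α * b) * ∫ y in (0:ℝ)..b, f y) (Set.Ioi 0) ∧
    IntegrableOn (fun b => Real.exp (-α * b) * f b) (Set.Ioi 0) ∧
    (∫ b in Set.Ioi (0:ℝ), Real.exp (-α * b) * ∫ y in (0:ℝ)..b, f y) =
      (1/α) * ∫ b in Set.Ioi (0:ℝ), Real.exp (-α * b) * f b := by
  have hα : 0 < α := hβ.trans hαβ
  have hFd : ∀ b, HasDerivAt (fun u => ∫ y in (0:ℝ)..u, f y) (f b) b := prim_hasDerivAt hf
  set F : ℝ → ℝ := fun u => ∫ y in (0:ℝ)..u, f y with hFdef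
  have hFc : Continuous F :=
    continuous_iff_continuousAt.mpr fun b => (hFd b).continuousAt
  -- nonnegativity of F
  have hFnn : ∀ b, 0 ≤ b → 0 ≤ F b := by
    intro b hb
    exact intervalIntegral.integral_nonneg hb (fun x hx => hf0 x hx.1)
  -- bound on F
  have hFb : ∀ b, 0 ≤ b → F b ≤ C / β * Real.exp (β * b) := by
    intro b hb
    have h1 : F b ≤ ∫ y in (0:ℝ)..b, C * Real.exp (β * y) := by
      apply intervalIntegral.integral_mono_on hb (hf.intervalIntegrable 0 b)
        ((continuous_const.mul (Real.continuous_exp.comp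
          (continuous_const.mul continuous_id))).intervalIntegrable 0 b)
      intro x hx
      exact hfb x hx.1
    have h2 : ∫ y in (0:ℝ)..b, C * Real.exp (β * y)
        = C * ((Real.exp (β * b) - 1) / β) := by
      rw [intervalIntegral.integral_const_mul, my_integral_exp_mul β 0 b hβ.ne']
      simp
    calc F b ≤ C * ((Real.exp (β * b) - 1) / β) := h1.trans_eq h2
      _ ≤ C / β * Real.exp (β * b) := by
          rw [div_mul_eq_mul_div, mul_div_assoc]
          apply mul_le_mul_of_nonneg_left _ hC
          gcongr
          linarith [Real.exp_pos (β * b)]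
  -- integrability of exp * f
  have hsub : (0:ℝ) < α - β := by linarith
  have hdom : IntegrableOn (fun b : ℝ => C * Real.exp (-(α - β) * b)) (Set.Ioi 0) :=
    (exp_neg_integrableOn_Ioi 0 hsub).const_mul C
  have hint1 : IntegrableOn (fun b => Real.exp (-α * b) * f b) (Set.Ioi 0) := by
    apply Integrable.mono' hdom
    · exact ((Real.continuous_exp.comp (continuous_const.mul continuous_id)).mul
        hf).aestronglyMeasurable.restrict
    · filter_upwards [ae_restrict_mem measurableSet_Ioi] with b hb
      have hb' : (0:ℝ) ≤ b := le_of_lt hb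
      rw [Real.norm_eq_abs, abs_of_nonneg (mul_nonneg (Real.exp_pos _).le (hf0 b hb'))]
      calc Real.exp (-α * b) * f b ≤ Real.exp (-α * b) * (C * Real.exp (β * b)) :=
            mul_le_mul_of_nonneg_left (hfb b hb') (Real.exp_pos _).le
        _ = C * Real.exp (-(α - β) * b) := by
            have h3 : Real.exp (-(α - β) * b) = Real.exp (-α * b) * Real.exp (β * b) := by
              rw [← Real.exp_add]; ring_nf
            rw [h3]; ring
  -- integrability of exp * F
  have hdom2 : IntegrableOn (fun b : ℝ => C / β * Real.exp (-(α - β) * b)) (Set.Ioi 0) :=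
    (exp_neg_integrableOn_Ioi 0 hsub).const_mul (C / β)
  have hint2 : IntegrableOn (fun b => Real.exp (-α * b) * F b) (Set.Ioi 0) := by
    apply Integrable.mono' hdom2
    · exact ((Real.continuous_exp.comp (continuous_const.mul continuous_id)).mul
        hFc).aestronglyMeasurable.restrict
    · filter_upwards [ae_restrict_mem measurableSet_Ioi] with b hb
      have hb' : (0:ℝ) ≤ b := le_of_lt hb
      rw [Real.norm_eq_abs, abs_of_nonneg (mul_nonneg (Real.exp_pos _).le (hFnn b hb'))]
      calc Real.exp (-α * b) * F b ≤ Real.exp (-α * b) * (C / β * Real.exp (β * b)) :=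
            mul_le_mul_of_nonneg_left (hFb b hb') (Real.exp_pos _).le
        _ = C / β * Real.exp (-(α - β) * b) := by
            have h3 : Real.exp (-(α - β) * b) = Real.exp (-α * b) * Real.exp (β * b) := by
              rw [← Real.exp_add]; ring_nf
            rw [h3]; ring
  refine ⟨hFnn, hFb, hint2, hint1, ?_⟩
  -- integration by parts
  have hg : ∀ x ∈ Set.Ici (0:ℝ), HasDerivAt (fun b => -(1/α) * (Real.exp (-α * b) * F b))
      (Real.exp (-α * x) * F x - 1/α * (Real.exp (-α * x) * f x)) x := by
    intro x _
    have he : HasDerivAt (fun b : ℝ => Real.exp (-α * b)) (-α * Real.exp (-α * x)) x := by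
      simpa [mul_comm] using ((hasDerivAt_id x).const_mul (-α)).exp
    have h2 := (he.mul (hFd x)).const_mul (-(1/α))
    refine h2.congr_deriv ?_
    field_simp
    ring
  have hlim : Tendsto (fun b : ℝ => -(1/α) * (Real.exp (-α * b) * F b)) atTop (nhds 0) := by
    apply squeeze_zero_norm' (a := fun b => 1/α * (C / β) * Real.exp (-(α - β) * b))
    · filter_upwards [eventually_ge_atTop (0:ℝ)] with b hb
      rw [norm_mul, norm_mul, Real.norm_eq_abs, Real.norm_eq_abs, Real.norm_eq_abs,
        abs_of_nonneg (Real.exp_pos _).le, abs_of_nonneg (hFnn b hb)]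
      have : |(-(1/α))| = 1/α := by
        rw [abs_neg, abs_of_nonneg]; positivity
      rw [this]
      calc 1/α * (Real.exp (-α * b) * F b)
          ≤ 1/α * (Real.exp (-α * b) * (C / β * Real.exp (β * b))) := by
            apply mul_le_mul_of_nonneg_left _ (by positivity)
            exact mul_le_mul_of_nonneg_left (hFb b hb) (Real.exp_pos _).le
        _ = 1/α * (C / β) * Real.exp (-(α - β) * b) := by
            have h3 : Real.exp (-(α - β) * b) = Real.exp (-α * b) * Real.exp (β * b) := by
              rw [← Real.exp_add]; ring_nf
            rw [h3]; ring
    · have h0 : Tendsto (fun b : ℝ => Real.exp (-(α - β) * b)) atTop (nhds 0) := by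
        apply Real.tendsto_exp_atBot.comp
        exact Tendsto.const_mul_atTop_of_neg (by linarith) tendsto_id
      simpa using h0.const_mul (1/α * (C / β))
  have heq := integral_Ioi_of_hasDerivAt_of_tendsto' hg
    (hint2.sub (hint1.const_mul (1/α))) hlim
  rw [integral_sub hint2 (hint1.const_mul (1/α)), MeasureTheory.integral_const_mul] at heq
  have hF0 : F 0 = 0 := intervalIntegral.integral_same
  simp [hF0] at heq
  simp only [hFdef] at heq
  simp only [neg_mul]
  rw [one_div]
  linarith


/-- Quarantine part `R₂` of the basic reproduction number in the
negative-exponential-survival case: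
`∫₀^∞ k₂ μ e^{-(μ+γ)b} (∫₀ᵇ γ₁ e^{(γ-(γ₁+γ₂))σ} (∫₀^σ q₁ e^{((γ₁+γ₂)-(μ₁+q₁))η}
(∫₀^η e^{(μ₁+q₁)y} dy) dη) dσ) db` converges and equals
`k₂ γ₁ q₁ / ((μ+γ)(μ+γ₁+γ₂)(μ+μ₁+q₁))`. -/
theorem stmt_10 (μ γ μ₁ q₁ γ₁ γ₂ k₂ : ℝ)
    (hμ : 0 < μ) (hγ : 0 < γ) (hμ₁ : 0 < μ₁) (hq₁ : 0 < q₁)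
    (hγ₁ : 0 < γ₁) (hγ₂ : 0 < γ₂) (hk₂ : 0 < k₂) :
    IntegrableOn
      (fun b => k₂ * μ * Real.exp (-(μ + γ) * b) *
        ∫ σ in (0:ℝ)..b, γ₁ * Real.exp ((γ - (γ₁ + γ₂)) * σ) *
          ∫ η in (0:ℝ)..σ, q₁ * Real.exp (((γ₁ + γ₂) - (μ₁ + q₁)) * η) *
            ∫ y in (0:ℝ)..η, Real.exp ((μ₁ + q₁) * y))
      (Set.Ioi (0:ℝ)) ∧
    (∫ b in Set.Ioi (0:ℝ), k₂ * μ * Real.exp (-(μ + γ) * b) *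
        ∫ σ in (0:ℝ)..b, γ₁ * Real.exp ((γ - (γ₁ + γ₂)) * σ) *
          ∫ η in (0:ℝ)..σ, q₁ * Real.exp (((γ₁ + γ₂) - (μ₁ + q₁)) * η) *
            ∫ y in (0:ℝ)..η, Real.exp ((μ₁ + q₁) * y)) =
      k₂ * γ₁ * q₁ / ((μ + γ) * (μ + γ₁ + γ₂) * (μ + μ₁ + q₁)) := by
  have hc : 0 < μ₁ + q₁ := by linarith
  have hd : 0 < γ₁ + γ₂ := by linarith
  -- level 0
  have hf0c : Continuous fun y => Real.exp ((μ₁ + q₁) * y) :=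
    Real.continuous_exp.comp (continuous_const.mul continuous_id)
  have k0 := key (α := μ + (μ₁ + q₁)) (β := μ₁ + q₁) (C := 1) hc (by linarith) zero_le_one
    hf0c (fun t _ => (Real.exp_pos _).le) (fun t _ => by simp)
  obtain ⟨K0nn, K0b, -, -, K0eq⟩ := k0
  -- level 1
  set f₁ : ℝ → ℝ := fun η => q₁ * Real.exp (((γ₁ + γ₂) - (μ₁ + q₁)) * η) *
      ∫ y in (0:ℝ)..η, Real.exp ((μ₁ + q₁) * y) with hf1def
  have hf1c : Continuous f₁ := by
    apply Continuous.mul (continuous_const.mul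
      (Real.continuous_exp.comp (continuous_const.mul continuous_id)))
    exact continuous_iff_continuousAt.mpr fun b => (prim_hasDerivAt hf0c b).continuousAt
  have hf1nn : ∀ t, 0 ≤ t → 0 ≤ f₁ t := fun t ht =>
    mul_nonneg (mul_nonneg hq₁.le (Real.exp_pos _).le) (K0nn t ht)
  have hf1b : ∀ t, 0 ≤ t → f₁ t ≤ q₁ * (1 / (μ₁ + q₁)) * Real.exp ((γ₁ + γ₂) * t) := by
    intro t ht
    have h1 := K0b t ht
    calc f₁ t ≤ q₁ * Real.exp (((γ₁ + γ₂) - (μ₁ + q₁)) * t) *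
          (1 / (μ₁ + q₁) * Real.exp ((μ₁ + q₁) * t)) :=
          mul_le_mul_of_nonneg_left h1 (by positivity)
      _ = q₁ * (1 / (μ₁ + q₁)) * Real.exp ((γ₁ + γ₂) * t) := by
          rw [show Real.exp ((γ₁ + γ₂) * t)
              = Real.exp (((γ₁ + γ₂) - (μ₁ + q₁)) * t) * Real.exp ((μ₁ + q₁) * t) from by
            rw [← Real.exp_add]; ring_nf]
          ring
  have k1 := key (α := μ + (γ₁ + γ₂)) (β := γ₁ + γ₂) (C := q₁ * (1 / (μ₁ + q₁))) hd
    (by linarith) (by positivity) hf1c hf1nn hf1b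
  obtain ⟨K1nn, K1b, -, -, K1eq⟩ := k1
  -- level 2
  set f₂ : ℝ → ℝ := fun σ => γ₁ * Real.exp ((γ - (γ₁ + γ₂)) * σ) *
      ∫ η in (0:ℝ)..σ, f₁ η with hf2def
  have hf2c : Continuous f₂ := by
    apply Continuous.mul (continuous_const.mul
      (Real.continuous_exp.comp (continuous_const.mul continuous_id)))
    exact continuous_iff_continuousAt.mpr fun b => (prim_hasDerivAt hf1c b).continuousAt
  have hf2nn : ∀ t, 0 ≤ t → 0 ≤ f₂ t := fun t ht =>
    mul_nonneg (mul_nonneg hγ₁.le (Real.exp_pos _).le) (K1nn t ht)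
  have hf2b : ∀ t, 0 ≤ t →
      f₂ t ≤ γ₁ * (q₁ * (1 / (μ₁ + q₁)) / (γ₁ + γ₂)) * Real.exp (γ * t) := by
    intro t ht
    have h1 := K1b t ht
    calc f₂ t ≤ γ₁ * Real.exp ((γ - (γ₁ + γ₂)) * t) *
          (q₁ * (1 / (μ₁ + q₁)) / (γ₁ + γ₂) * Real.exp ((γ₁ + γ₂) * t)) :=
          mul_le_mul_of_nonneg_left h1 (by positivity)
      _ = γ₁ * (q₁ * (1 / (μ₁ + q₁)) / (γ₁ + γ₂)) * Real.exp (γ * t) := by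
          rw [show Real.exp (γ * t)
              = Real.exp ((γ - (γ₁ + γ₂)) * t) * Real.exp ((γ₁ + γ₂) * t) from by
            rw [← Real.exp_add]; ring_nf]
          ring
  have k2 := key (α := μ + γ) (β := γ) (C := γ₁ * (q₁ * (1 / (μ₁ + q₁)) / (γ₁ + γ₂))) hγ
    (by linarith) (by positivity) hf2c hf2nn hf2b
  obtain ⟨-, -, G2int, -, K2eq⟩ := k2
  constructor
  · simpa [mul_assoc, IntegrableOn] using G2int.const_mul (k₂ * μ)
  · have e2 : (∫ σ in Set.Ioi (0:ℝ), Real.exp (-(μ + γ) * σ) * f₂ σ)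
        = γ₁ * ∫ σ in Set.Ioi (0:ℝ),
            Real.exp (-(μ + (γ₁ + γ₂)) * σ) * ∫ η in (0:ℝ)..σ, f₁ η := by
      rw [← MeasureTheory.integral_const_mul]
      congr 1
      funext σ
      rw [hf2def]
      have h3 : Real.exp (-(μ + γ) * σ) * Real.exp ((γ - (γ₁ + γ₂)) * σ)
          = Real.exp (-(μ + (γ₁ + γ₂)) * σ) := by rw [← Real.exp_add]; ring_nf
      rw [← h3]; ring
    have e3 : (∫ η in Set.Ioi (0:ℝ), Real.exp (-(μ + (γ₁ + γ₂)) * η) * f₁ η)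
        = q₁ * ∫ η in Set.Ioi (0:ℝ), Real.exp (-(μ + (μ₁ + q₁)) * η) *
            ∫ y in (0:ℝ)..η, Real.exp ((μ₁ + q₁) * y) := by
      rw [← MeasureTheory.integral_const_mul]
      congr 1
      funext η
      rw [hf1def]
      have h3 : Real.exp (-(μ + (γ₁ + γ₂)) * η) * Real.exp (((γ₁ + γ₂) - (μ₁ + q₁)) * η)
          = Real.exp (-(μ + (μ₁ + q₁)) * η) := by rw [← Real.exp_add]; ring_nf
      rw [← h3]; ring
    have e4 : (∫ y in Set.Ioi (0:ℝ), Real.exp (-(μ + (μ₁ + q₁)) * y) *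
        Real.exp ((μ₁ + q₁) * y)) = 1 / μ := by
      rw [show (fun y => Real.exp (-(μ + (μ₁ + q₁)) * y) * Real.exp ((μ₁ + q₁) * y))
          = fun y => Real.exp (-μ * y) from funext fun y => by rw [← Real.exp_add]; ring_nf]
      exact my_integral_exp_neg_mul_Ioi hμ
    have e1 : (∫ b in Set.Ioi (0:ℝ), k₂ * μ * Real.exp (-(μ + γ) * b) *
          ∫ σ in (0:ℝ)..b, f₂ σ)
        = (k₂ * μ) * ∫ b in Set.Ioi (0:ℝ), Real.exp (-(μ + γ) * b) *
            ∫ σ in (0:ℝ)..b, f₂ σ := by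
      rw [← MeasureTheory.integral_const_mul]
      congr 1
      funext b
      ring
    rw [e1, K2eq, e2, K1eq, e3, K0eq, e4]
    field_simp
    ring
end
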